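/- Let R be a commutative ring that is also a ℚ-algebra, and let {·,·} : R × R → R be a bilinear map that is antisymmetric and satisfies the Leibniz rule in each argument. Let N be a nonzero rational number, and let (I_n)_{n≥1}, (J_n)_{n≥1} be elements of R satisfying {I_n, I_m} = 0 and {J_n, I_m} = (n+m−1)·I_{n+m−1} for all n, m ≥ 1. Define q₀ = J₁ and J̃_{n+1} = J_{n+1} − (n/N)·q₀·I_n for n ≥ 1. Then for all n, m ≥ 1: {J̃_{n+1}, I_m} = (m+n)·I_{m+n} − (mn/N)·I_m·I_n. -/
import Mathlib


/-- Decoupling of the center-of-mass position in the second Poisson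
structure of the rational Calogero–Moser model: the `{J̃, I}` bracket.
The bracket is a ℚ-bilinear map on a commutative ℚ-algebra `R`, antisymmetric and
satisfying the Leibniz rule in each argument. -/
theorem stmt0 (R : Type*) [CommRing R] [Algebra ℚ R]
    (br : R →ₗ[ℚ] R →ₗ[ℚ] R)
    (br_anti : ∀ x y : R, br x y = - br y x)
    (br_leibniz_right : ∀ x y z : R, br x (y * z) = y * br x z + br x y * z)
    (br_leibniz_left : ∀ x y z : R, br (x * y) z = x * br y z + br x z * y)
    (N : ℚ) (hN : N ≠ 0)
    (I J : ℕ → R)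
    (hII : ∀ n m : ℕ, 1 ≤ n → 1 ≤ m → br (I n) (I m) = 0)
    (hJI : ∀ n m : ℕ, 1 ≤ n → 1 ≤ m →
      br (J n) (I m) = ((n + m - 1 : ℕ) : R) * I (n + m - 1))
    (q₀ : R) (hq₀ : q₀ = J 1)
    (Jt : ℕ → R)
    (hJt : ∀ n : ℕ, 1 ≤ n → Jt (n + 1) = J (n + 1) - ((n : ℚ) / N) • (q₀ * I n)) :
    ∀ n m : ℕ, 1 ≤ n → 1 ≤ m →
      br (Jt (n + 1)) (I m)
        = ((m + n : ℕ) : R) * I (m + n) - (((m : ℚ) * n) / N) • (I m * I n) := by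
  intro n m hn hm
  rw [hJt n hn]
  rw [map_sub, map_smul, LinearMap.sub_apply, LinearMap.smul_apply]
  rw [hJI (n+1) m (by omega) hm, br_leibniz_left, hII n m hn hm, hq₀,
    hJI 1 m le_rfl hm]
  have h1 : n + 1 + m - 1 = m + n := by omega
  have h2 : 1 + m - 1 = m := by omega
  rw [h1, h2]
  have : ((n : ℚ) / N) • (q₀ * 0 + ((m : R) * I m) * I n)
      = ((m : ℚ) * n / N) • (I m * I n) := by
    rw [mul_zero, zero_add]
    have : ((m : R) * I m) * I n = (m : ℚ) • (I m * I n) := by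
      rw [mul_assoc]
      simp [Algebra.smul_def, map_natCast]
    rw [this, smul_smul]
    congr 1
    ring
  rw [hq₀] at this
  rw [this]
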